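/- Let E be a finite directed graph without sinks and let u ∈ U_E. Then: (1) if u D_E u* ⊆ D_E, then λ_u(D_E) ⊆ D_E; and (2) if λ_u(D_E) = D_E, then u D_E u* ⊆ D_E. -/

import Mathlib

/-- A finite directed graph. -/
structure FinDirGraph where
  V : Type
  E : Type
  [instFV : Fintype V]
  [instFE : Fintype E]
  [instDV : DecidableEq V]
  [instDE : DecidableEq E]
  r : E → V
  s : E → V

attribute [instance] FinDirGraph.instFV FinDirGraph.instFE FinDirGraph.instDV FinDirGraph.instDE

namespace FinDirGraph

variable (G : FinDirGraph)

/-- `G.IsPathFrom v l` : the list of edges `l` forms a path starting at vertex `v`. -/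
def IsPathFrom : G.V → List G.E → Prop
  | _, [] => True
  | v, e :: l => G.s e = v ∧ IsPathFrom (G.r e) l

/-- The terminal vertex of a list of edges starting at `v`. -/
def rangeFrom : G.V → List G.E → G.V
  | v, [] => v
  | _, e :: l => rangeFrom (G.r e) l

/-- A finite path in the graph `G`; vertices are the paths of length `0`. -/
structure Path where
  src : G.V
  edges : List G.E
  ok : G.IsPathFrom src edges

variable {G}

/-- The length of a path. -/
def Path.len (μ : G.Path) : ℕ := μ.edges.length

/-- The range (terminal vertex) of a path. -/
def Path.rng (μ : G.Path) : G.V := G.rangeFrom μ.src μ.edges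

variable (G)

/-- `G` has no sinks: every vertex emits at least one edge. -/
def NoSinks : Prop := ∀ v : G.V, ∃ e : G.E, G.s e = v

/-- `G` has no sources: every vertex receives at least one edge. -/
def NoSources : Prop := ∀ v : G.V, ∃ e : G.E, G.r e = v

/-- Every loop in `G` has an exit. -/
def EveryLoopHasExit : Prop :=
  ∀ μ : G.Path, μ.edges ≠ [] → μ.src = μ.rng →
    ∃ e ∈ μ.edges, ∃ f g : G.E, f ≠ g ∧ G.s f = G.s e ∧ G.s g = G.s e

variable (A : Type) [CStarAlgebra A] [PartialOrder A] [StarOrderedRing A]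

/-- A Cuntz–Krieger `G`-family in a unital C*-algebra `A`. -/
structure CKFamily where
  P : G.V → A
  S : G.E → A
  proj_idem : ∀ v, P v * P v = P v
  proj_sa : ∀ v, star (P v) = P v
  orth : ∀ v w, v ≠ w → P v * P w = 0
  ck1 : ∀ e, star (S e) * S e = P (G.r e)
  ck1' : ∀ e f, e ≠ f → star (S e) * S f = 0
  ck2 : ∀ e, S e * star (S e) ≤ P (G.s e)
  ck3 : ∀ v : G.V, (∃ e, G.s e = v) →
    P v = ∑ e ∈ Finset.univ.filter (fun e => G.s e = v), S e * star (S e)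

variable {G A}

/-- The partial isometry `S_μ` associated to a finite path, defined from the source. -/
def CKFamily.sFrom (F : CKFamily G A) : G.V → List G.E → A
  | v, [] => F.P v
  | _, e :: l => F.S e * F.sFrom (G.r e) l

/-- `S_μ` for a path `μ`. -/
def CKFamily.sPath (F : CKFamily G A) (μ : G.Path) : A := F.sFrom μ.src μ.edges

/-- `P_μ = S_μ S_μ*` for a path `μ`. -/
def CKFamily.pPath (F : CKFamily G A) (μ : G.Path) : A :=
  F.sPath μ * star (F.sPath μ)

variable (G A) in
/-- `A`, together with the Cuntz–Krieger family `F`, is the graph C*-algebra `C*(G)`: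
the family sums to one, generates `A` as a closed *-subalgebra, and is universal. -/
structure IsGraphCStarAlgebra (F : CKFamily G A) : Prop where
  sum_one : ∑ v : G.V, F.P v = 1
  generates :
    (StarAlgebra.adjoin ℂ (Set.range F.P ∪ Set.range F.S)).topologicalClosure = ⊤
  universal : ∀ (C : Type) [CStarAlgebra C] [PartialOrder C] [StarOrderedRing C]
    (F' : CKFamily G C), (∑ v : G.V, F'.P v) = 1 →
      ∃! φ : A →⋆ₐ[ℂ] C, (∀ v, φ (F.P v) = F'.P v) ∧ (∀ e, φ (F.S e) = F'.S e)

/-- The diagonal subalgebra `D_E`: the closed *-subalgebra generated by the `P_μ`. -/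
def CKFamily.DE (F : CKFamily G A) : StarSubalgebra ℂ A :=
  (StarAlgebra.adjoin ℂ {a : A | ∃ μ : G.Path, a = F.pPath μ}).topologicalClosure

/-- `D_E^k`: the linear span of the `P_μ`, `μ ∈ E^k`. -/
noncomputable def CKFamily.DEk (F : CKFamily G A) (k : ℕ) : Submodule ℂ A :=
  Submodule.span ℂ {a : A | ∃ μ : G.Path, μ.len = k ∧ a = F.pPath μ}

/-- The core AF-subalgebra `F_E`: closed linear span of words `S_μ S_ν*` with `|μ| = |ν|`. -/
def CKFamily.FE (F : CKFamily G A) : Set A :=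
  closure ((Submodule.span ℂ
    {a : A | ∃ μ ν : G.Path, μ.len = ν.len ∧ a = F.sPath μ * star (F.sPath ν)}
      : Submodule ℂ A) : Set A)

/-- `F_E^k`: the linear span of words `S_μ S_ν*` with `|μ| = |ν| = k`. -/
noncomputable def CKFamily.FEk (F : CKFamily G A) (k : ℕ) : Submodule ℂ A :=
  Submodule.span ℂ
    {a : A | ∃ μ ν : G.Path, μ.len = k ∧ ν.len = k ∧ a = F.sPath μ * star (F.sPath ν)}

/-- `u ∈ U_E` : `u` is a unitary commuting with all vertex projections. -/
def CKFamily.IsUE (F : CKFamily G A) (u : A) : Prop :=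
  u ∈ unitary A ∧ ∀ v, u * F.P v = F.P v * u

/-- `lam = λ_u` : the endomorphism determined by the unitary `u ∈ U_E`. -/
def CKFamily.IsLambdaU (F : CKFamily G A) (u : A) (lam : A →⋆ₐ[ℂ] A) : Prop :=
  (∀ e, lam (F.S e) = u * F.S e) ∧ (∀ v, lam (F.P v) = F.P v)

/-- The shift `φ(x) = Σ_e S_e x S_e*`. -/
def CKFamily.shift (F : CKFamily G A) (x : A) : A :=
  ∑ e : G.E, F.S e * x * star (F.S e)

/-- `u_k = u φ(u) ⋯ φ^{k-1}(u)` (with `u_0 = 1`). -/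
def CKFamily.ukProd (F : CKFamily G A) (u : A) : ℕ → A
  | 0 => 1
  | m + 1 => F.ukProd u m * F.shift^[m] u

/-- An element is a finite sum of words `S_α S_β*`. -/
def CKFamily.IsSumOfWords (F : CKFamily G A) (a : A) : Prop :=
  ∃ (n : ℕ) (μ ν : Fin n → G.Path),
    a = ∑ i, F.sPath (μ i) * star (F.sPath (ν i))

/-- The group `S_E` of unitaries of the form `Σ S_α S_β*`. -/
def CKFamily.SE (F : CKFamily G A) : Set A :=
  {a : A | a ∈ unitary A ∧ F.IsSumOfWords a}

/-- The group `P_E^k` of unitaries of the form `Σ S_α S_β*`, `|α| = |β| = k`. -/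
def CKFamily.PEk (F : CKFamily G A) (k : ℕ) : Set A :=
  {a : A | a ∈ unitary A ∧ ∃ (n : ℕ) (μ ν : Fin n → G.Path),
    (∀ i, (μ i).len = k ∧ (ν i).len = k) ∧
    a = ∑ i, F.sPath (μ i) * star (F.sPath (ν i))}

/-- `P_E = ∪_k P_E^k`. -/
def CKFamily.PE (F : CKFamily G A) : Set A := ⋃ k : ℕ, F.PEk k

/-- `γ_z` on generators: `γ (S e) = z • S e`, `γ (P v) = P v`. -/
def CKFamily.IsGaugeHom (F : CKFamily G A) (z : ℂ) (ρ : A →⋆ₐ[ℂ] A) : Prop :=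
  (∀ e, ρ (F.S e) = z • F.S e) ∧ (∀ v, ρ (F.P v) = F.P v)

/-- `γ_z` as an automorphism, on generators. -/
def CKFamily.IsGaugeAut (F : CKFamily G A) (z : ℂ) (γ : A ≃⋆ₐ[ℂ] A) : Prop :=
  (∀ e, γ (F.S e) = z • F.S e) ∧ (∀ v, γ (F.P v) = F.P v)

/-- The automorphism `α` of `C*(E)` is induced by an automorphism of the graph `E`. -/
def CKFamily.IsGraphInduced (F : CKFamily G A) (α : A ≃⋆ₐ[ℂ] A) : Prop :=
  ∃ (φV : G.V ≃ G.V) (φE : G.E ≃ G.E),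
    (∀ e, G.s (φE e) = φV (G.s e)) ∧ (∀ e, G.r (φE e) = φV (G.r e)) ∧
    (∀ e, α (F.S e) = F.S (φE e)) ∧ (∀ v, α (F.P v) = F.P (φV v))

/-- Membership in the subgroup `𝔊_E` of `Aut (C*(E))` generated by the graph
automorphisms `Γ_E` together with the automorphisms `λ_u`, `u ∈ S_E ∩ U_E`. -/
inductive CKFamily.InGG (F : CKFamily G A) : (A ≃⋆ₐ[ℂ] A) → Prop
  | gamma (α : A ≃⋆ₐ[ℂ] A) : F.IsGraphInduced α → F.InGG α
  | lam (α : A ≃⋆ₐ[ℂ] A) (u : A) : u ∈ F.SE → F.IsUE u →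
      (∀ e, α (F.S e) = u * F.S e) → (∀ v, α (F.P v) = F.P v) → F.InGG α
  | one : F.InGG (StarAlgEquiv.refl _ _)
  | mul (α β : A ≃⋆ₐ[ℂ] A) : F.InGG α → F.InGG β → F.InGG (α.trans β)
  | inv (α : A ≃⋆ₐ[ℂ] A) : F.InGG α → F.InGG α.symm

/-- Membership in the subgroup `𝔊ℜ_E` of `Aut (C*(E))` generated by the graph
automorphisms `Γ_E` together with the automorphisms `λ_u`, `u ∈ P_E ∩ U_E`. -/
inductive CKFamily.InGGR (F : CKFamily G A) : (A ≃⋆ₐ[ℂ] A) → Prop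
  | gamma (α : A ≃⋆ₐ[ℂ] A) : F.IsGraphInduced α → F.InGGR α
  | lam (α : A ≃⋆ₐ[ℂ] A) (u : A) : u ∈ F.PE → F.IsUE u →
      (∀ e, α (F.S e) = u * F.S e) → (∀ v, α (F.P v) = F.P v) → F.InGGR α
  | one : F.InGGR (StarAlgEquiv.refl _ _)
  | mul (α β : A ≃⋆ₐ[ℂ] A) : F.InGGR α → F.InGGR β → F.InGGR (α.trans β)
  | inv (α : A ≃⋆ₐ[ℂ] A) : F.InGGR α → F.InGGR α.symm


/-- The map `a^u_{e,f}(x) = S_e* u* x u S_f`. -/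
def CKFamily.amap (F : CKFamily G A) (u : A) (e f : G.E) (x : A) : A :=
  star (F.S e) * (star u * x * u) * F.S f

/-- Composition of the maps `a^u_{e,f}` along a list of pairs of edges. -/
def CKFamily.acomp (F : CKFamily G A) (u : A) : List (G.E × G.E) → A → A
  | [], x => x
  | p :: t, x => F.amap u p.1 p.2 (F.acomp u t x)

/-- The spaces `Ξ_r`: `Ξ_0 = F_E^{k-1}`, `Ξ_r = λ_u(H)* Ξ_{r-1} λ_u(H)`. -/
noncomputable def CKFamily.Xi (F : CKFamily G A) (u : A) (k : ℕ) : ℕ → Submodule ℂ A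
  | 0 => F.FEk (k - 1)
  | r + 1 => Submodule.span ℂ
      {a : A | ∃ x ∈ F.Xi u k r, ∃ e f : G.E, a = star (u * F.S e) * x * (u * F.S f)}

/-- The spaces `Ξ_r^D`: `Ξ_0^D = D_E^{k-1}`, `Ξ_r^D = λ_u(H)* Ξ_{r-1}^D λ_u(H)`. -/
noncomputable def CKFamily.XiD (F : CKFamily G A) (u : A) (k : ℕ) : ℕ → Submodule ℂ A
  | 0 => F.DEk (k - 1)
  | r + 1 => Submodule.span ℂ
      {a : A | ∃ x ∈ F.XiD u k r, ∃ e f : G.E, a = star (u * F.S e) * x * (u * F.S f)}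

end FinDirGraph

/-!
Both parts only need to be checked on the generators `P_μ` of `D_E`, because `λ_u` and
`Ad u = u · u*` are continuous *-endomorphisms. For a path `eμ` we have `P_{eμ} = S_e P_μ S_e*`,
hence `λ_u(P_{eμ}) = u S_e λ_u(P_μ) S_e* u*`; and conjugation by `S_e` preserves `D_E`, since it
is multiplicative on the commutant of `S_e* S_e = P_{r(e)}`, which contains `D_E`.
For (1) this gives `λ_u(P_μ) ∈ D_E` by induction on `|μ|`; for (2) write `P_μ = λ_u(d)` with
`d ∈ D_E`, so that `u P_{eμ} u* = λ_u(S_e d S_e*) ∈ λ_u(D_E) = D_E`.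
-/

section PartialIsometry

variable {A : Type*} [NormedRing A] [StarRing A] [CStarRing A]

theorem mul_star_mul_self_eq_self {t : A} (ht : IsIdempotentElem (star t * t)) :
    t * (star t * t) = t := by
  have h : star (t * (star t * t) - t) * (t * (star t * t) - t) = 0 := by
    have hsa : star (star t * t) = star t * t := by rw [star_mul, star_star]
    rw [star_sub, star_mul, hsa]
    calc (star t * t * star t - star t) * (t * (star t * t) - t)
        = (star t * t) * (star t * t) * (star t * t) - (star t * t) * (star t * t)
          - (star t * t) * (star t * t) + star t * t := by noncomm_ring
      _ = 0 := by rw [ht.eq, ht.eq]; abel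
  exact sub_eq_zero.mp (CStarRing.star_mul_self_eq_zero_iff _ |>.mp h)

end PartialIsometry

namespace StarSubalgebra

open StarAlgebra

variable {R A : Type*} [CommSemiring R] [StarRing R] [Ring A] [StarRing A] [Algebra R A]
  [StarModule R A] [TopologicalSpace A] [IsTopologicalRing A] [ContinuousStar A]

theorem mapsTo_topologicalClosure_adjoin {X : Set A} (φ : A →⋆ₐ[R] A) (hφ : Continuous φ)
    (hX : Set.MapsTo φ X (adjoin R X).topologicalClosure) :
    Set.MapsTo φ (adjoin R X).topologicalClosure (adjoin R X).topologicalClosure := by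
  have hle : (adjoin R X).topologicalClosure ≤ (adjoin R X).topologicalClosure.comap φ :=
    topologicalClosure_minimal (adjoin_le hX)
      ((isClosed_topologicalClosure _).preimage hφ)
  exact fun d hd => hle hd

theorem conj_mapsTo_topologicalClosure_adjoin {X : Set A} {s : A}
    (hs : s * (star s * s) = s)
    (hcomm : ∀ d ∈ (adjoin R X).topologicalClosure, Commute (star s * s) d)
    (hss : s * star s ∈ (adjoin R X).topologicalClosure)
    (hX : Set.MapsTo (fun x => s * x * star s) X (adjoin R X).topologicalClosure) :
    Set.MapsTo (fun x => s * x * star s) (adjoin R X).topologicalClosure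
      (adjoin R X).topologicalClosure := by
  set D := (adjoin R X).topologicalClosure
  have hs' : star s * s * star s = star s := by
    simpa only [star_mul, star_star, mul_assoc] using congrArg star hs
  let T : StarSubalgebra R A :=
    { carrier := {d | d ∈ D ∧ s * d * star s ∈ D}
      mul_mem' := by
        rintro a b ⟨ha, ha'⟩ ⟨hb, hb'⟩
        refine ⟨mul_mem ha hb, ?_⟩
        have hab : s * a * star s * (s * b * star s) = s * (a * b) * star s :=
          calc s * a * star s * (s * b * star s) = s * a * ((star s * s) * b) * star s := by
                noncomm_ring
            _ = s * (a * b) * (star s * s * star s) := by rw [(hcomm b hb).eq]; noncomm_ring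
            _ = s * (a * b) * star s := by rw [hs']
        exact hab ▸ mul_mem ha' hb'
      add_mem' := by
        rintro a b ⟨ha, ha'⟩ ⟨hb, hb'⟩
        refine ⟨add_mem ha hb, ?_⟩
        rw [mul_add, add_mul]
        exact add_mem ha' hb'
      algebraMap_mem' := fun c => by
        refine ⟨algebraMap_mem D c, ?_⟩
        rw [Algebra.algebraMap_eq_smul_one, mul_smul_comm, mul_one, smul_mul_assoc]
        exact SMulMemClass.smul_mem c hss
      star_mem' := by
        rintro a ⟨ha, ha'⟩
        refine ⟨star_mem ha, ?_⟩
        simpa only [star_mul, star_star, mul_assoc] using star_mem ha' }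
  have hT : IsClosed (T : Set A) :=
    (isClosed_topologicalClosure _).inter ((isClosed_topologicalClosure _).preimage
      ((continuous_const.mul continuous_id).mul continuous_const))
  have hle : D ≤ T :=
    topologicalClosure_minimal (adjoin_le fun x hx =>
      ⟨le_topologicalClosure _ (subset_adjoin R X hx), hX hx⟩) hT
  exact fun d hd => (hle hd).2

end StarSubalgebra

namespace FinDirGraph

variable {G : FinDirGraph}

def Path.nil (v : G.V) : G.Path := ⟨v, [], trivial⟩

def Path.cons (e : G.E) (μ : G.Path) (h : μ.src = G.r e) : G.Path :=
  ⟨G.s e, e :: μ.edges, ⟨rfl, h ▸ μ.ok⟩⟩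

@[elab_as_elim]
theorem Path.induction {motive : G.Path → Prop} (nil : ∀ v, motive (Path.nil v))
    (cons : ∀ e μ (h : μ.src = G.r e), motive μ → motive (Path.cons e μ h)) :
    ∀ μ, motive μ
  | ⟨v, [], _⟩ => nil v
  | ⟨_, e :: l, ⟨rfl, hl⟩⟩ =>
    cons e ⟨G.r e, l, hl⟩ rfl (Path.induction nil cons ⟨G.r e, l, hl⟩)
termination_by μ => μ.edges.length
decreasing_by simp

namespace CKFamily

open StarAlgebra

variable {A : Type} [CStarAlgebra A] [PartialOrder A] (F : CKFamily G A)

theorem isStarProjection_P (v : G.V) : IsStarProjection (F.P v) :=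
  ⟨F.proj_idem v, F.proj_sa v⟩

theorem S_mul_P_range (e : G.E) : F.S e * F.P (G.r e) = F.S e := by
  have h := mul_star_mul_self_eq_self (t := F.S e) (by rw [F.ck1]; exact F.proj_idem _)
  rwa [F.ck1] at h

theorem S_mul_star_S_mul_S (e : G.E) : F.S e * star (F.S e) * F.S e = F.S e := by
  rw [mul_assoc, F.ck1, F.S_mul_P_range]

theorem P_source_mul_S [StarOrderedRing A] (e : G.E) : F.P (G.s e) * F.S e = F.S e := by
  have h := ((F.isStarProjection_P (G.s e)).mul_right_and_mul_left_of_nonneg_of_le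
    (mul_star_self_nonneg (F.S e)) (F.ck2 e)).2
  rw [← F.S_mul_star_S_mul_S, ← mul_assoc, h]

theorem sPath_cons (e : G.E) (μ : G.Path) (h : μ.src = G.r e) :
    F.sPath (μ.cons e h) = F.S e * F.sPath μ := by
  obtain ⟨v, l, ok⟩ := μ
  cases h
  rfl

theorem pPath_nil (v : G.V) : F.pPath (Path.nil v) = F.P v := by
  rw [pPath, sPath, Path.nil, sFrom, F.proj_sa, F.proj_idem]

theorem pPath_cons (e : G.E) (μ : G.Path) (h : μ.src = G.r e) :
    F.pPath (μ.cons e h) = F.S e * F.pPath μ * star (F.S e) := by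
  rw [pPath, pPath, sPath_cons, star_mul, mul_assoc, mul_assoc, mul_assoc]

theorem star_pPath (μ : G.Path) : star (F.pPath μ) = F.pPath μ := by
  rw [pPath, star_mul, star_star]

theorem P_src_mul_sPath [StarOrderedRing A] (μ : G.Path) :
    F.P μ.src * F.sPath μ = F.sPath μ := by
  induction μ using Path.induction with
  | nil v => exact F.proj_idem v
  | cons e μ h _ => rw [sPath_cons, ← mul_assoc]; exact congrArg (· * _) (F.P_source_mul_S e)

theorem P_mul_pPath [StarOrderedRing A] (v : G.V) (μ : G.Path) :
    F.P v * F.pPath μ = if v = μ.src then F.pPath μ else 0 := by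
  split_ifs with hv
  · rw [hv, pPath, ← mul_assoc, F.P_src_mul_sPath]
  · rw [pPath, ← F.P_src_mul_sPath, ← mul_assoc, ← mul_assoc, F.orth _ _ hv, zero_mul, zero_mul]

theorem commute_P_pPath [StarOrderedRing A] (v : G.V) (μ : G.Path) :
    Commute (F.P v) (F.pPath μ) := by
  have h : F.pPath μ * F.P v = star (F.P v * F.pPath μ) := by
    rw [star_mul, F.star_pPath, F.proj_sa]
  rw [Commute, SemiconjBy, h, F.P_mul_pPath]
  split_ifs
  · exact (F.star_pPath μ).symm
  · exact star_zero A |>.symm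

theorem pPath_mem_DE (μ : G.Path) : F.pPath μ ∈ F.DE :=
  StarSubalgebra.le_topologicalClosure _ (subset_adjoin ℂ _ ⟨μ, rfl⟩)

theorem P_mem_DE (v : G.V) : F.P v ∈ F.DE :=
  F.pPath_nil v ▸ F.pPath_mem_DE _

theorem commute_P_of_mem_DE [StarOrderedRing A] (v : G.V) {d : A} (hd : d ∈ F.DE) :
    Commute (F.P v) d := by
  have hP : F.P v ∈ StarSubalgebra.centralizer ℂ {a | ∃ μ, a = F.pPath μ} := by
    rw [StarSubalgebra.mem_centralizer_iff]
    rintro _ ⟨μ, rfl⟩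
    rw [F.star_pPath, and_self]
    exact (F.commute_P_pPath v μ).eq.symm
  have hd' := StarSubalgebra.topologicalClosure_adjoin_le_centralizer_centralizer ℂ _ hd
  exact ((StarSubalgebra.mem_centralizer_iff ℂ).mp hd' _ hP).1

theorem S_mul_pPath_of_ne [StarOrderedRing A] (e : G.E) {μ : G.Path} (h : μ.src ≠ G.r e) :
    F.S e * F.pPath μ = 0 := by
  have h0 := F.P_mul_pPath (G.r e) μ
  rw [if_neg (Ne.symm h)] at h0
  rw [← F.S_mul_P_range, mul_assoc, h0, mul_zero]

theorem S_conj_mem_DE [StarOrderedRing A] (e : G.E) {d : A} (hd : d ∈ F.DE) :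
    F.S e * d * star (F.S e) ∈ F.DE := by
  refine StarSubalgebra.conj_mapsTo_topologicalClosure_adjoin (F.ck1 e ▸ F.S_mul_P_range e)
    (fun d hd => F.ck1 e ▸ F.commute_P_of_mem_DE _ hd) ?_ ?_ hd
  · have h := F.pPath_cons e (Path.nil (G.r e)) rfl
    rw [F.pPath_nil, F.S_mul_P_range] at h
    exact h ▸ F.pPath_mem_DE _
  · rintro _ ⟨μ, rfl⟩
    change F.S e * F.pPath μ * star (F.S e) ∈ F.DE
    by_cases h : μ.src = G.r e
    · rw [← F.pPath_cons e μ h]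
      exact F.pPath_mem_DE _
    · rw [F.S_mul_pPath_of_ne e h, zero_mul]
      exact zero_mem _

open scoped CStarAlgebra in
theorem map_mem_DE (φ : A →⋆ₐ[ℂ] A) (h : ∀ μ, φ (F.pPath μ) ∈ F.DE) :
    ∀ d ∈ F.DE, φ d ∈ F.DE :=
  StarSubalgebra.mapsTo_topologicalClosure_adjoin φ (map_continuous φ)
    (by rintro _ ⟨μ, rfl⟩; exact h μ)

theorem IsLambdaU.map_S_conj {u : A} {lam : A →⋆ₐ[ℂ] A} (hlam : F.IsLambdaU u lam) (e : G.E)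
    (d : A) : lam (F.S e * d * star (F.S e)) = u * (F.S e * lam d * star (F.S e)) * star u := by
  rw [map_mul, map_mul, map_star, hlam.1 e, star_mul]
  noncomm_ring

end CKFamily

end FinDirGraph

open FinDirGraph in
theorem stmt_0_general (G : FinDirGraph)
    (A : Type) [CStarAlgebra A] [PartialOrder A] [StarOrderedRing A]
    (F : CKFamily G A)
    (u : A) (hu : F.IsUE u) (lam : A →⋆ₐ[ℂ] A) (hlam : F.IsLambdaU u lam) :
    ((∀ d ∈ F.DE, u * d * star u ∈ F.DE) → ∀ d ∈ F.DE, lam d ∈ F.DE) ∧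
    (⇑lam '' (F.DE : Set A) = (F.DE : Set A) → ∀ d ∈ F.DE, u * d * star u ∈ F.DE) := by
  obtain ⟨huU, huP⟩ := hu
  refine ⟨fun hconj => F.map_mem_DE lam fun μ => ?_, fun himg => ?_⟩
  · induction μ using Path.induction with
    | nil v => rw [F.pPath_nil, hlam.2 v]; exact F.P_mem_DE v
    | cons e μ h ih =>
      rw [F.pPath_cons, hlam.map_S_conj]
      exact hconj _ (F.S_conj_mem_DE e ih)
  · let Ad : A →⋆ₐ[ℂ] A := (Unitary.conjStarAlgAut ℂ A ⟨u, huU⟩).toStarAlgHom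
    refine F.map_mem_DE Ad fun μ => ?_
    change u * F.pPath μ * star u ∈ F.DE
    induction μ using Path.induction with
    | nil v =>
      rw [F.pPath_nil, huP, mul_assoc, Unitary.mul_star_self_of_mem huU, mul_one]
      exact F.P_mem_DE v
    | cons e μ h _ =>
      obtain ⟨d, hd, hμ⟩ : F.pPath μ ∈ ⇑lam '' F.DE := himg.symm ▸ F.pPath_mem_DE μ
      rw [F.pPath_cons, ← hμ, ← hlam.map_S_conj, ← SetLike.mem_coe, ← himg]
      exact Set.mem_image_of_mem lam (F.S_conj_mem_DE e hd)

open FinDirGraph in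
/-- Proposition 3.1 (normalDautos). -/
theorem stmt_0 (G : FinDirGraph) (hns : G.NoSinks)
    (A : Type) [CStarAlgebra A] [PartialOrder A] [StarOrderedRing A]
    (F : CKFamily G A) (hGA : IsGraphCStarAlgebra G A F)
    (u : A) (hu : F.IsUE u) (lam : A →⋆ₐ[ℂ] A) (hlam : F.IsLambdaU u lam) :
    ((∀ d ∈ F.DE, u * d * star u ∈ F.DE) → ∀ d ∈ F.DE, lam d ∈ F.DE) ∧
    (⇑lam '' (F.DE : Set A) = (F.DE : Set A) → ∀ d ∈ F.DE, u * d * star u ∈ F.DE) :=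
  stmt_0_general G A F u hu lam hlam
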